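/- For all W > 0, W·ψ'(W) - 1 > 0, where ψ' is the trigamma function. -/

import Mathlib

open Real MeasureTheory Filter Set

noncomputable def digamma (x : ℝ) : ℝ := deriv (fun y => Real.log (Real.Gamma y)) x

noncomputable def trigamma (x : ℝ) : ℝ := deriv digamma x

lemma analyticAt_complex_Gamma {x : ℝ} (hx : 0 < x) :
    AnalyticAt ℂ Complex.Gamma (x : ℂ) := by
  rw [Complex.analyticAt_iff_eventually_differentiableAt]
  have hre : ∀ᶠ z : ℂ in nhds (x : ℂ), 0 < z.re := by
    have : ContinuousAt Complex.re (x : ℂ) := Complex.continuous_re.continuousAt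
    have := this.eventually_mem (Ioi_mem_nhds (by simpa using hx))
    simpa using this
  filter_upwards [hre] with z hz
  refine Complex.differentiableAt_Gamma _ fun m => ?_
  intro h
  rw [h] at hz
  simp at hz
  have : (0:ℝ) ≤ m := m.cast_nonneg
  linarith

lemma analyticAt_logGamma {x : ℝ} (hx : 0 < x) :
    AnalyticAt ℝ (fun y => Real.log (Real.Gamma y)) x := by
  have hG : AnalyticAt ℂ Complex.Gamma (x : ℂ) := analyticAt_complex_Gamma hx
  have hmem : Complex.Gamma (x : ℂ) ∈ Complex.slitPlane := by
    rw [Complex.Gamma_ofReal]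
    exact Complex.ofReal_mem_slitPlane.mpr (Real.Gamma_pos_of_pos hx)
  have hlog : AnalyticAt ℂ (fun z => Complex.log (Complex.Gamma z)) (x : ℂ) :=
    (analyticAt_clog hmem).comp hG
  have h1 : AnalyticAt ℝ (fun y : ℝ => (Complex.log (Complex.Gamma (y : ℂ))).re) x := by
    have hofReal : AnalyticAt ℝ (fun y : ℝ => (y : ℂ)) x :=
      Complex.ofRealCLM.analyticAt x
    have h2 : AnalyticAt ℝ (fun z => Complex.log (Complex.Gamma z)) (x : ℂ) :=
      hlog.restrictScalars
    have h3 := (Complex.reCLM.analyticAt _).comp (h2.comp hofReal)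
    exact h3
  have heq : (fun y : ℝ => (Complex.log (Complex.Gamma (y : ℂ))).re)
      = fun y => Real.log (Real.Gamma y) := by
    funext y
    rw [Complex.Gamma_ofReal, Complex.log_ofReal_re]
  rwa [heq] at h1

lemma analyticAt_digamma {x : ℝ} (hx : 0 < x) : AnalyticAt ℝ digamma x := by
  have h : AnalyticOnNhd ℝ (fun y => Real.log (Real.Gamma y)) (Ioi 0) :=
    fun y hy => analyticAt_logGamma hy
  exact h.deriv x hx

lemma differentiableAt_logGamma {x : ℝ} (hx : 0 < x) :
    DifferentiableAt ℝ (fun y => Real.log (Real.Gamma y)) x :=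
  (analyticAt_logGamma hx).differentiableAt

lemma digamma_fe {x : ℝ} (hx : 0 < x) : digamma (x + 1) = digamma x + 1 / x := by
  have hfe : (fun y : ℝ => Real.log (Real.Gamma (y + 1)))
      =ᶠ[nhds x] (fun y : ℝ => Real.log (Real.Gamma y) + Real.log y) := by
    filter_upwards [Ioi_mem_nhds hx] with y hy
    have hy0 : (0:ℝ) < y := hy
    rw [Real.Gamma_add_one hy0.ne', Real.log_mul hy0.ne' (Real.Gamma_pos_of_pos hy0).ne',
      add_comm]
  have h1 : deriv (fun y : ℝ => Real.log (Real.Gamma (y + 1))) x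
      = deriv (fun y : ℝ => Real.log (Real.Gamma y) + Real.log y) x := hfe.deriv_eq
  rw [deriv_comp_add_const (fun y => Real.log (Real.Gamma y)) 1 x] at h1
  rw [deriv_fun_add (differentiableAt_logGamma hx) (Real.differentiableAt_log hx.ne')] at h1
  rw [Real.deriv_log] at h1
  unfold digamma
  rw [one_div]
  exact h1

lemma trigamma_fe {x : ℝ} (hx : 0 < x) : trigamma (x + 1) = trigamma x - 1 / x ^ 2 := by
  have hfe : (fun y : ℝ => digamma (y + 1))
      =ᶠ[nhds x] (fun y : ℝ => digamma y + y⁻¹) := by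
    filter_upwards [Ioi_mem_nhds hx] with y hy
    have : digamma (y + 1) = digamma y + 1 / y := digamma_fe hy
    simpa [one_div] using this
  have h1 : deriv (fun y : ℝ => digamma (y + 1)) x
      = deriv (fun y : ℝ => digamma y + y⁻¹) x := hfe.deriv_eq
  rw [deriv_comp_add_const digamma 1 x] at h1
  rw [deriv_fun_add (analyticAt_digamma hx).differentiableAt
    (differentiableAt_inv hx.ne'), deriv_inv] at h1
  unfold trigamma
  rw [h1]
  ring

lemma trigamma_nonneg {x : ℝ} (hx : 0 < x) : 0 ≤ trigamma x := by
  have hconv : ConvexOn ℝ (Ioi 0) (Real.log ∘ Real.Gamma) := Real.convexOn_log_Gamma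
  have hmono : MonotoneOn (deriv (Real.log ∘ Real.Gamma)) (Ioi 0) :=
    hconv.monotoneOn_deriv fun y hy => differentiableAt_logGamma hy
  have hdig : MonotoneOn digamma (Ioi 0) := by
    have : digamma = deriv (Real.log ∘ Real.Gamma) := rfl
    rw [this]; exact hmono
  have hd : DifferentiableAt ℝ digamma x := (analyticAt_digamma hx).differentiableAt
  have h := hd.hasDerivAt
  rw [hasDerivAt_iff_tendsto_slope] at h
  have h' : Tendsto (slope digamma x) (nhdsWithin x (Ioi x)) (nhds (trigamma x)) :=
    h.mono_left (nhdsWithin_mono x fun y hy => ne_of_gt hy)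
  refine ge_of_tendsto h' ?_
  filter_upwards [self_mem_nhdsWithin] with y hy
  have hxy : x < y := hy
  have hy0 : (0:ℝ) < y := hx.trans hxy
  rw [slope_def_field]
  apply div_nonneg
  · have := hdig hx hy0 hxy.le
    linarith
  · linarith

lemma trigamma_sum (W : ℝ) (hW : 0 < W) (n : ℕ) :
    trigamma W = (∑ k ∈ Finset.range n, 1 / (W + k) ^ 2) + trigamma (W + n) := by
  induction n with
  | zero => simp
  | succ n ih =>
    have hWn : 0 < W + n := by positivity
    have := trigamma_fe hWn
    rw [Finset.sum_range_succ]
    push_cast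
    rw [show W + ((n:ℝ) + 1) = (W + n) + 1 by ring, this]
    linarith

theorem stmt6 (W : ℝ) (hW : 0 < W) : 0 < W * trigamma W - 1 := by
  have hW1 : (0:ℝ) < W + 1 := by linarith
  -- trigamma W = 1/W^2 + trigamma (W+1)
  have hstep : trigamma W = 1 / W ^ 2 + trigamma (W + 1) := by
    have := trigamma_fe hW
    linarith
  -- lower bound for trigamma (W+1)
  have hlow : ∀ n : ℕ, 1 / (W + 1) - 1 / (W + 1 + n) ≤ trigamma (W + 1) := by
    intro n
    have hsum := trigamma_sum (W + 1) hW1 n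
    have htel : ∑ k ∈ Finset.range n, (1 / (W + 1 + k) - 1 / (W + 1 + (k + 1 : ℕ)))
        = 1 / (W + 1 + (0:ℕ)) - 1 / (W + 1 + n) := by
      exact Finset.sum_range_sub' (fun k : ℕ => 1 / (W + 1 + k)) n
    have hterm : ∀ k ∈ Finset.range n,
        1 / (W + 1 + k) - 1 / (W + 1 + (k + 1 : ℕ)) ≤ 1 / (W + 1 + k) ^ 2 := by
      intro k _
      have hk : (0:ℝ) < W + 1 + k := by positivity
      have hk1 : (0:ℝ) < W + 1 + k + 1 := by linarith
      push_cast
      have e : (1:ℝ) / (W + 1 + k) - 1 / (W + 1 + ((k:ℝ) + 1))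
          = 1 / ((W + 1 + k) * (W + 1 + k + 1)) := by
        rw [show W + 1 + ((k:ℝ) + 1) = (W + 1 + k) + 1 by ring,
          div_sub_div _ _ hk.ne' hk1.ne']
        congr 1
        ring
      rw [e]
      have h2 : (W + 1 + (k:ℝ)) ^ 2 ≤ (W + 1 + k) * (W + 1 + k + 1) := by nlinarith
      exact one_div_le_one_div_of_le (by positivity) h2
    have hsum_le : ∑ k ∈ Finset.range n, (1 / (W + 1 + k) - 1 / (W + 1 + (k + 1 : ℕ)))
        ≤ ∑ k ∈ Finset.range n, 1 / (W + 1 + k) ^ 2 := Finset.sum_le_sum hterm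
    rw [htel] at hsum_le
    have hnn : 0 ≤ trigamma (W + 1 + n) := trigamma_nonneg (by positivity)
    have : (W + 1 + (n:ℝ)) = (W + 1) + n := by ring
    calc 1 / (W + 1) - 1 / (W + 1 + n)
        = 1 / (W + 1 + (0:ℕ)) - 1 / (W + 1 + n) := by norm_num
      _ ≤ ∑ k ∈ Finset.range n, 1 / (W + 1 + k) ^ 2 := hsum_le
      _ ≤ ∑ k ∈ Finset.range n, 1 / ((W + 1) + k) ^ 2 + trigamma ((W + 1) + n) := by
          rw [show ∑ k ∈ Finset.range n, 1 / (W + 1 + (k:ℝ)) ^ 2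
              = ∑ k ∈ Finset.range n, 1 / ((W + 1) + (k:ℝ)) ^ 2 from rfl]
          linarith [trigamma_nonneg (show (0:ℝ) < (W+1) + n by positivity)]
      _ = trigamma (W + 1) := hsum.symm
  -- take the limit n → ∞
  have hlim : Tendsto (fun n : ℕ => 1 / (W + 1) - 1 / (W + 1 + n)) atTop
      (nhds (1 / (W + 1) - 0)) := by
    apply Tendsto.const_sub
    have h1 : Tendsto (fun n : ℕ => W + 1 + (n:ℝ)) atTop atTop :=
      tendsto_atTop_add_const_left _ _ tendsto_natCast_atTop_atTop
    simpa [one_div, Pi.inv_def] using h1.inv_tendsto_atTop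
  have hge : 1 / (W + 1) - 0 ≤ trigamma (W + 1) := le_of_tendsto hlim
    (Filter.Eventually.of_forall hlow)
  rw [sub_zero] at hge
  -- conclude
  have hfin : 1 / W ^ 2 + 1 / (W + 1) ≤ trigamma W := by
    rw [hstep]; linarith
  have hW2 : (0:ℝ) < W ^ 2 := by positivity
  have : W * (1 / W ^ 2 + 1 / (W + 1)) - 1 = 1 / W - 1 / (W + 1) := by
    field_simp
    ring
  have hpos : 0 < 1 / W - 1 / (W + 1) :=
    sub_pos.mpr (one_div_lt_one_div_of_lt hW (lt_add_one W))
  nlinarith [mul_le_mul_of_nonneg_left hfin hW.le]
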